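/- Let z ∈ ℝ^n with Σ_i z_i = 0, σ a permutation with z_{σ(1)} ≤ ... ≤ z_{σ(n)}, and c ∈ ℝ^n with Σ_i c_i = 0. Suppose there exists b̄ > 0 with Σ_{i=1}^j c_{σ(i)} ≥ b̄ for all j ∈ {1,...,n−1}. Then Σ_{i=1}^n z_i c_i ≤ −b̄ · max_{1 ≤ i ≤ n} |z_i|. -/

import Mathlib

/-!
Sort `z` increasingly as `w = z ∘ σ` and write `d = c ∘ σ`. Since `∑ d = 0`, Abel summation gives
`∑ wᵢ dᵢ = -∑_{j<n} (w_{j+1} - w_j) (d₀ + ⋯ + d_j)`, a combination of partial sums, each at least `b̄`,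
with nonnegative weights telescoping to `w_n - w_0`; hence `∑ wᵢ dᵢ ≤ -b̄ (w_n - w_0)`.
Finally `w_0 ≤ 0 ≤ w_n` because `z` has zero sum, so every `|zᵢ|` is at most `w_n - w_0`.
-/

open Finset

theorem sum_range_mul_le_of_le_partial_sums {R : Type*} [CommRing R] [PartialOrder R]
    [IsOrderedRing R] {w d : ℕ → R} {n : ℕ} {b : R} (hw : ∀ i < n, w i ≤ w (i + 1))
    (hd : ∑ i ∈ range (n + 1), d i = 0) (hb : ∀ j, 1 ≤ j → j ≤ n → b ≤ ∑ i ∈ range j, d i) :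
    ∑ i ∈ range (n + 1), w i * d i ≤ -b * (w n - w 0) := by
  have hterm : ∀ i ∈ range n,
      b * (w (i + 1) - w i) ≤ (w (i + 1) - w i) * ∑ k ∈ range (i + 1), d k := fun i hi => by
    rw [mem_range] at hi
    rw [mul_comm]
    exact mul_le_mul_of_nonneg_left (hb (i + 1) (by omega) hi) (sub_nonneg.2 (hw i hi))
  calc ∑ i ∈ range (n + 1), w i * d i
        = -∑ i ∈ range n, (w (i + 1) - w i) * ∑ k ∈ range (i + 1), d k := by
          simpa [hd] using sum_range_by_parts w d (n + 1)
    _ ≤ -∑ i ∈ range n, b * (w (i + 1) - w i) := neg_le_neg (sum_le_sum hterm)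
    _ = -b * (w n - w 0) := by rw [← mul_sum, sum_range_sub, neg_mul]

theorem sum_filter_fin_val_lt_eq_sum_range {M : Type*} [AddCommMonoid M] {n j : ℕ} (hj : j ≤ n)
    (f : ℕ → M) :
    ∑ i ∈ univ.filter (fun i : Fin n => (i : ℕ) < j), f i = ∑ i ∈ range j, f i := by
  rw [sum_filter, Fin.sum_univ_eq_sum_range (fun i => if i < j then f i else 0), ← sum_filter]
  congr 1
  ext
  simp only [mem_filter, mem_range]
  omega

theorem sum_mul_le_of_monotone_of_le_partial_sums {R : Type*} [CommRing R] [PartialOrder R]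
    [IsOrderedRing R] {n : ℕ} {w d : Fin (n + 1) → R} {b : R} (hw : Monotone w)
    (hd : ∑ i, d i = 0)
    (hb : ∀ j : ℕ, 1 ≤ j → j ≤ n →
      b ≤ ∑ i ∈ univ.filter (fun i : Fin (n + 1) => (i : ℕ) < j), d i) :
    ∑ i, w i * d i ≤ -b * (w (Fin.last n) - w 0) := by
  set W : ℕ → R := fun k => w (Fin.ofNat (n + 1) k)
  set D : ℕ → R := fun k => d (Fin.ofNat (n + 1) k)
  have hW : ∀ i < n, W i ≤ W (i + 1) := fun i hi =>
    hw (by simp [Fin.le_def, Nat.mod_eq_of_lt (by omega : i < n + 1),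
      Nat.mod_eq_of_lt (by omega : i + 1 < n + 1)])
  have hD : ∑ i ∈ range (n + 1), D i = 0 := by
    rw [← Fin.sum_univ_eq_sum_range]
    simpa [D] using hd
  have hb' : ∀ j, 1 ≤ j → j ≤ n → b ≤ ∑ i ∈ range j, D i := fun j h1 h2 => by
    rw [← sum_filter_fin_val_lt_eq_sum_range (n := n + 1) (by omega)]
    simpa [D] using hb j h1 h2
  have key := sum_range_mul_le_of_le_partial_sums hW hD hb'
  rw [← Fin.sum_univ_eq_sum_range (fun i => W i * D i)] at key
  simpa [W, D] using key

theorem abs_le_sub_of_sum_eq_zero {ι α : Type*} [Fintype ι] [AddCommGroup α] [LinearOrder α]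
    [IsOrderedAddMonoid α] {z : ι → α} (hz : ∑ i, z i = 0) {m M : α} (hm : ∀ i, m ≤ z i)
    (hM : ∀ i, z i ≤ M) (i : ι) : |z i| ≤ M - m := by
  have : Nonempty ι := ⟨i⟩
  have hM0 : 0 ≤ M := (nsmul_nonneg_iff Fintype.card_ne_zero).1 <| by
    simpa [hz] using sum_le_card_nsmul univ z M fun j _ => hM j
  have hm0 : m ≤ 0 := (nsmul_nonpos_iff Fintype.card_ne_zero).1 <| by
    simpa [hz] using card_nsmul_le_sum univ z m fun j _ => hm j
  rw [abs_le, neg_sub]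
  exact ⟨(sub_le_self m hM0).trans (hm i), (hM i).trans ((le_sub_self_iff M).2 hm0)⟩

theorem stmt4 (n : ℕ) (z c : Fin (n+1) → ℝ)
    (hz : ∑ i, z i = 0) (hc : ∑ i, c i = 0)
    (σ : Equiv.Perm (Fin (n+1))) (hσ : Monotone (z ∘ σ))
    (bbar : ℝ) (hbbar : 0 < bbar)
    (hpos : ∀ j : ℕ, 1 ≤ j → j ≤ n →
      bbar ≤ ∑ i ∈ Finset.univ.filter (fun i : Fin (n+1) => (i : ℕ) < j), c (σ i)) :
    ∑ i, z i * c i ≤ -bbar * (Finset.univ.sup' Finset.univ_nonempty fun i => |z i|) := by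
  have hzσ : ∑ i, z (σ i) = 0 := by rwa [Equiv.sum_comp]
  have hcσ : ∑ i, c (σ i) = 0 := by rwa [Equiv.sum_comp]
  have hbound : ∀ i, |z i| ≤ z (σ (Fin.last n)) - z (σ 0) := fun i => by
    simpa using abs_le_sub_of_sum_eq_zero hzσ (fun j => hσ (Fin.zero_le j))
      (fun j => hσ (Fin.le_last j)) (σ.symm i)
  calc ∑ i, z i * c i = ∑ i, z (σ i) * c (σ i) := (Equiv.sum_comp σ fun i => z i * c i).symm
    _ ≤ -bbar * (z (σ (Fin.last n)) - z (σ 0)) :=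
      sum_mul_le_of_monotone_of_le_partial_sums hσ hcσ hpos
    _ ≤ _ := by
      rw [neg_mul, neg_mul, neg_le_neg_iff]
      exact mul_le_mul_of_nonneg_left (sup'_le _ _ fun i _ => hbound i) hbbar.le
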